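/- arXiv:2603.28705 — 5 statements merged into one kernel-verified Lean document; each statement's English description precedes it below -/
import Mathlib

section
/- Fix n ≥ 1 experts, a budget c ≥ 0, and a message profile m : Fin n → ℝ. Suppose expert i is strictly pivotal, i.e., the allocation at the full sum ∑_k m_k differs from the allocation at s_i = ∑_{j≠i} m_j alone, and s_i ≠ 0; and suppose expert j is non-pivotal, i.e., the allocation at the full sum equals the allocation at s_j = ∑_{k≠j} m_k alone. Then on a positive outcome the total transfers are equal: t_i + r_i(1) = c/n = t_j + r_j(1); and on a negative outcome the pivotal expert is strictly more penalized: t_i + r_i(−1) < t_j + r_j(−1) = −c/n. Hence the mechanism satisfies Weak Accountability. -/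
/-!
The pivotal transfer of an expert is `-|s|` exactly when his message flips the allocation and `0`
otherwise. On a positive outcome the reward cancels the transfer, leaving `c/n` for everyone; on a
negative outcome the transfer is counted twice, so the pivotal expert ends at `-2|s_i| - c/n`,
strictly below the `-c/n` of a non-pivotal one because `s_i ≠ 0`.
-/

/-- The pivotal (VCG) transfer for message `m` against opponent sum `s`. -/
noncomputable def vcg (m s : ℝ) : ℝ :=
  if (0 ≤ m + s ∧ s < 0) ∨ (m + s < 0 ∧ 0 ≤ s) then -|s| else 0

/-- Opponent sum of expert `i`: the sum of all messages except `i`'s. -/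
noncomputable def sOpp {n : ℕ} (m : Fin n → ℝ) (i : Fin n) : ℝ :=
  ∑ j ∈ Finset.univ.erase i, m j

/-- Ex-post reward with budget `c`, `n` experts, transfer `t`, outcome `Δ`. -/
noncomputable def reward (c : ℝ) (n : ℕ) (t : ℝ) (Δ : ℤ) : ℝ :=
  if Δ = 1 then -t + c / n else t - c / n

lemma sum_eq_add_sOpp {n : ℕ} (m : Fin n → ℝ) (i : Fin n) :
    ∑ k, m k = m i + sOpp m i :=
  (Finset.add_sum_erase _ _ (Finset.mem_univ i)).symm

lemma vcg_eq_ite (m s : ℝ) :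
    vcg m s = if (0 ≤ m + s ↔ 0 ≤ s) then 0 else -|s| := by
  unfold vcg
  by_cases h₁ : 0 ≤ m + s <;> by_cases h₂ : 0 ≤ s <;> simp [h₁, h₂]

lemma vcg_of_pivotal {m s : ℝ} (h : ¬ (0 ≤ m + s ↔ 0 ≤ s)) : vcg m s = -|s| := by
  rw [vcg_eq_ite, if_neg h]

lemma vcg_of_not_pivotal {m s : ℝ} (h : 0 ≤ m + s ↔ 0 ≤ s) : vcg m s = 0 := by
  rw [vcg_eq_ite, if_pos h]

lemma add_reward_one (c : ℝ) (n : ℕ) (t : ℝ) : t + reward c n t 1 = c / n := by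
  simp [reward]

lemma add_reward_neg_one (c : ℝ) (n : ℕ) (t : ℝ) : t + reward c n t (-1) = 2 * t - c / n := by
  simp only [reward, if_neg (by decide : (-1 : ℤ) ≠ 1)]
  ring

theorem weak_accountability_general (n : ℕ) (c : ℝ)
    (m : Fin n → ℝ) (i j : Fin n)
    (hpiv : ¬ ((0 ≤ ∑ k, m k) ↔ (0 ≤ sOpp m i))) (hsi : sOpp m i ≠ 0)
    (hnonpiv : (0 ≤ ∑ k, m k) ↔ (0 ≤ sOpp m j)) :
    vcg (m i) (sOpp m i) + reward c n (vcg (m i) (sOpp m i)) 1 = c / n ∧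
    vcg (m j) (sOpp m j) + reward c n (vcg (m j) (sOpp m j)) 1 = c / n ∧
    vcg (m i) (sOpp m i) + reward c n (vcg (m i) (sOpp m i)) (-1) <
      vcg (m j) (sOpp m j) + reward c n (vcg (m j) (sOpp m j)) (-1) ∧
    vcg (m j) (sOpp m j) + reward c n (vcg (m j) (sOpp m j)) (-1) = -(c / n) := by
  rw [sum_eq_add_sOpp m i] at hpiv
  rw [sum_eq_add_sOpp m j] at hnonpiv
  have hti := vcg_of_pivotal hpiv
  have htj := vcg_of_not_pivotal hnonpiv
  have hsi_pos : 0 < |sOpp m i| := abs_pos.mpr hsi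
  refine ⟨add_reward_one .., add_reward_one .., ?_, ?_⟩
  · rw [add_reward_neg_one, add_reward_neg_one, hti, htj]
    linarith
  · rw [add_reward_neg_one, htj]
    ring

/-- Weak Accountability. If expert `i` is strictly pivotal
(the allocation at the full sum differs from the allocation at `s_i`, and
`s_i ≠ 0`) while expert `j` is non-pivotal, then on a positive outcome both
total transfers equal `c/n`, and on a negative outcome the pivotal expert is
strictly more penalized, the non-pivotal one getting exactly `-c/n`. -/
theorem weak_accountability (n : ℕ) (hn : 1 ≤ n) (c : ℝ) (hc : 0 ≤ c)
    (m : Fin n → ℝ) (i j : Fin n)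
    (hpiv : ¬ ((0 ≤ ∑ k, m k) ↔ (0 ≤ sOpp m i))) (hsi : sOpp m i ≠ 0)
    (hnonpiv : (0 ≤ ∑ k, m k) ↔ (0 ≤ sOpp m j)) :
    vcg (m i) (sOpp m i) + reward c n (vcg (m i) (sOpp m i)) 1 = c / n ∧
    vcg (m j) (sOpp m j) + reward c n (vcg (m j) (sOpp m j)) 1 = c / n ∧
    vcg (m i) (sOpp m i) + reward c n (vcg (m i) (sOpp m i)) (-1) <
      vcg (m j) (sOpp m j) + reward c n (vcg (m j) (sOpp m j)) (-1) ∧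
    vcg (m j) (sOpp m j) + reward c n (vcg (m j) (sOpp m j)) (-1) = -(c / n) :=
  weak_accountability_general n c m i j hpiv hsi hnonpiv
end

section
/- Let (θA, θB, pA, pB) be an expert type with θA, θB ∈ ℝ, pA, pB ∈ (0,1), and suppose the expert is aligned: (θA − θB)·(pA − pB) > 0. Let γ ≥ 0. Then the reference report m⋆ is a weakly dominant strategy: for every opponent sum s ∈ ℝ and every alternative report m' ∈ ℝ, Eu(m⋆, s) ≥ Eu(m', s). -/
/-- Expected utility of an expert of type `(θA, θB, pA, pB)` with per-expert
budget `γ` from reporting `m` against opponent sum `s`. -/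
noncomputable def Eu (θA θB pA pB γ m s : ℝ) : ℝ :=
  if 0 ≤ m + s then θA + 2 * vcg m s * (1 - pA) + (2 * pA - 1) * γ
  else θB + 2 * vcg m s * (1 - pB) + (2 * pB - 1) * γ

/-- The reference report `m⋆` of an expert of type `(θA, θB, pA, pB)` with
per-expert budget `γ`. -/
noncomputable def mstar (θA θB pA pB γ : ℝ) : ℝ :=
  if θB ≤ θA then (θA - θB) / (2 * (1 - pA)) + γ * (pA - pB) / (1 - pA)
  else (θA - θB) / (2 * (1 - pB)) + γ * (pA - pB) / (1 - pB)

lemma Eu_AA (θA θB pA pB γ m s : ℝ) (h1 : 0 ≤ s) (h2 : 0 ≤ m + s) :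
    Eu θA θB pA pB γ m s = θA + (2 * pA - 1) * γ := by
  have hv : vcg m s = 0 := by
    rw [vcg, if_neg]; rintro (⟨_, h⟩ | ⟨h, _⟩) <;> linarith
  rw [Eu, if_pos h2, hv]; ring

lemma Eu_AB (θA θB pA pB γ m s : ℝ) (h1 : 0 ≤ s) (h2 : m + s < 0) :
    Eu θA θB pA pB γ m s = θB + 2 * (-s) * (1 - pB) + (2 * pB - 1) * γ := by
  have hv : vcg m s = -s := by
    rw [vcg, if_pos (Or.inr ⟨h2, h1⟩), abs_of_nonneg h1]
  rw [Eu, if_neg (not_le.mpr h2), hv]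

lemma Eu_BA (θA θB pA pB γ m s : ℝ) (h1 : s < 0) (h2 : 0 ≤ m + s) :
    Eu θA θB pA pB γ m s = θA + 2 * s * (1 - pA) + (2 * pA - 1) * γ := by
  have hv : vcg m s = s := by
    rw [vcg, if_pos (Or.inl ⟨h2, h1⟩), abs_of_neg h1]; ring
  rw [Eu, if_pos h2, hv]

lemma Eu_BB (θA θB pA pB γ m s : ℝ) (h1 : s < 0) (h2 : m + s < 0) :
    Eu θA θB pA pB γ m s = θB + (2 * pB - 1) * γ := by
  have hv : vcg m s = 0 := by
    rw [vcg, if_neg]; rintro (⟨h, _⟩ | ⟨_, h⟩) <;> linarith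
  rw [Eu, if_neg (not_le.mpr h2), hv]; ring

/-- Dominant Strategy for Aligned Agents. If the expert is aligned
(`(θA − θB)·(pA − pB) > 0`) then the reference report `m⋆` is weakly dominant:
for every opponent sum `s` and every report `m'`, `Eu(m⋆, s) ≥ Eu(m', s)`. -/
theorem aligned_dominant_strategy (θA θB pA pB γ : ℝ)
    (hpA : pA ∈ Set.Ioo (0 : ℝ) 1) (hpB : pB ∈ Set.Ioo (0 : ℝ) 1)
    (halign : (θA - θB) * (pA - pB) > 0) (hγ : 0 ≤ γ) :
    ∀ s m' : ℝ, Eu θA θB pA pB γ m' s ≤ Eu θA θB pA pB γ (mstar θA θB pA pB γ) s := by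
  obtain ⟨hpA0, hpA1⟩ := hpA
  obtain ⟨hpB0, hpB1⟩ := hpB
  have h1A : (0:ℝ) < 1 - pA := by linarith
  have h1B : (0:ℝ) < 1 - pB := by linarith
  intro s m'
  set M := mstar θA θB pA pB γ with hMdef
  rcases le_or_gt θB θA with hT | hT
  · -- aligned toward A
    have hd : 0 < θA - θB := by
      rcases lt_or_eq_of_le (by linarith : (0:ℝ) ≤ θA - θB) with h | h
      · exact h
      · exfalso; rw [← h, zero_mul] at halign; exact lt_irrefl _ halign
    have hq : 0 < pA - pB := by
      rcases mul_pos_iff.mp halign with ⟨_, h⟩ | ⟨h, _⟩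
      · exact h
      · linarith
    have hMe : M = (θA - θB) / (2 * (1 - pA)) + γ * (pA - pB) / (1 - pA) := by
      rw [hMdef, mstar, if_pos hT]
    have hM2 : 2 * M * (1 - pA) = (θA - θB) + 2 * γ * (pA - pB) := by
      rw [hMe]; field_simp
    have hMpos : 0 < M := by
      rw [hMe]
      have := mul_nonneg hγ hq.le
      positivity
    rcases le_or_gt 0 s with hs | hs
    · have hms : 0 ≤ M + s := by linarith
      rw [Eu_AA θA θB pA pB γ M s hs hms]
      rcases le_or_gt 0 (m' + s) with hm | hm
      · rw [Eu_AA θA θB pA pB γ m' s hs hm]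
      · rw [Eu_AB θA θB pA pB γ m' s hs hm]
        nlinarith [mul_nonneg hs h1B.le]
    · rcases le_or_gt 0 (M + s) with hms | hms
      · rw [Eu_BA θA θB pA pB γ M s hs hms]
        rcases le_or_gt 0 (m' + s) with hm | hm
        · rw [Eu_BA θA θB pA pB γ m' s hs hm]
        · rw [Eu_BB θA θB pA pB γ m' s hs hm]
          nlinarith [mul_nonneg hms h1A.le]
      · rw [Eu_BB θA θB pA pB γ M s hs hms]
        rcases le_or_gt 0 (m' + s) with hm | hm
        · rw [Eu_BA θA θB pA pB γ m' s hs hm]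
          nlinarith [mul_pos (by linarith : (0:ℝ) < -(M + s)) h1A]
        · rw [Eu_BB θA θB pA pB γ m' s hs hm]
  · -- aligned toward B
    have hd : 0 < θB - θA := by linarith
    have hq : 0 < pB - pA := by
      rcases mul_pos_iff.mp halign with ⟨h, _⟩ | ⟨_, h⟩
      · linarith
      · linarith
    have hMe : M = (θA - θB) / (2 * (1 - pB)) + γ * (pA - pB) / (1 - pB) := by
      rw [hMdef, mstar, if_neg (not_le.mpr hT)]
    have hM2 : 2 * M * (1 - pB) = (θA - θB) + 2 * γ * (pA - pB) := by
      rw [hMe]; field_simp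
    have hMneg : M < 0 := by
      nlinarith [mul_nonneg hγ hq.le]
    rcases le_or_gt 0 s with hs | hs
    · rcases le_or_gt 0 (M + s) with hms | hms
      · rw [Eu_AA θA θB pA pB γ M s hs hms]
        rcases le_or_gt 0 (m' + s) with hm | hm
        · rw [Eu_AA θA θB pA pB γ m' s hs hm]
        · rw [Eu_AB θA θB pA pB γ m' s hs hm]
          nlinarith [mul_nonneg hms h1B.le]
      · rw [Eu_AB θA θB pA pB γ M s hs hms]
        rcases le_or_gt 0 (m' + s) with hm | hm
        · rw [Eu_AA θA θB pA pB γ m' s hs hm]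
          nlinarith [mul_pos (by linarith : (0:ℝ) < -(M + s)) h1B]
        · rw [Eu_AB θA θB pA pB γ m' s hs hm]
    · have hms : M + s < 0 := by linarith
      rw [Eu_BB θA θB pA pB γ M s hs hms]
      rcases le_or_gt 0 (m' + s) with hm | hm
      · rw [Eu_BA θA θB pA pB γ m' s hs hm]
        nlinarith [mul_pos (by linarith : (0:ℝ) < -s) h1A]
      · rw [Eu_BB θA θB pA pB γ m' s hs hm]
end

section
/- Let (θA, θB, pA, pB) be any expert type with θA, θB ∈ ℝ and pA, pB ∈ (0,1), let γ ≥ 0, let s ∈ ℝ be the opponent sum, and let m' ∈ ℝ be any report such that the allocation changes relative to the reference report m⋆ toward the alternative with lower success probability from the expert's own perspective: either (m'+s ≥ 0 and m⋆+s < 0 and pA < pB) or (m'+s < 0 and m⋆+s ≥ 0 and pB < pA). Then Eu(m', s) ≤ Eu(m⋆, s). -/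
lemma key_lt (c x y s : ℝ) (hc : 0 < c) (h : x / (2 * c) + y / c + s < 0) :
    x + 2 * y + 2 * c * s < 0 := by
  have h2 : x / (2 * c) + y / c + s = (x + 2 * y + 2 * c * s) / (2 * c) := by
    field_simp
  rw [h2] at h
  have h3 : (x + 2 * y + 2 * c * s) / (2 * c) * (2 * c) < 0 :=
    mul_neg_of_neg_of_pos h (by linarith)
  rwa [div_mul_cancel₀ _ (by positivity : (2 * c : ℝ) ≠ 0)] at h3

lemma key_ge (c x y s : ℝ) (hc : 0 < c) (h : 0 ≤ x / (2 * c) + y / c + s) :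
    0 ≤ x + 2 * y + 2 * c * s := by
  have h2 : x / (2 * c) + y / c + s = (x + 2 * y + 2 * c * s) / (2 * c) := by
    field_simp
  rw [h2] at h
  have h3 : 0 ≤ (x + 2 * y + 2 * c * s) / (2 * c) * (2 * c) :=
    mul_nonneg h (by linarith)
  rwa [div_mul_cancel₀ _ (by positivity : (2 * c : ℝ) ≠ 0)] at h3

/-- Safe Deviation. For any expert (aligned or unaligned), any
report `m'` that changes the allocation relative to the reference report `m⋆`
toward the alternative the expert believes is less likely to succeed is weakly
dominated by `m⋆`. -/
theorem safe_deviation (θA θB pA pB γ s m' : ℝ)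
    (hpA : pA ∈ Set.Ioo (0 : ℝ) 1) (hpB : pB ∈ Set.Ioo (0 : ℝ) 1) (hγ : 0 ≤ γ)
    (hdev : (0 ≤ m' + s ∧ mstar θA θB pA pB γ + s < 0 ∧ pA < pB) ∨
            (m' + s < 0 ∧ 0 ≤ mstar θA θB pA pB γ + s ∧ pB < pA)) :
    Eu θA θB pA pB γ m' s ≤ Eu θA θB pA pB γ (mstar θA θB pA pB γ) s := by
  have h1A : (0:ℝ) < 1 - pA := by linarith [hpA.2]
  have h1B : (0:ℝ) < 1 - pB := by linarith [hpB.2]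
  set M := mstar θA θB pA pB γ with hMdef
  rcases hdev with ⟨hm', hM, hp⟩ | ⟨hm', hM, hp⟩
  · -- m'+s ≥ 0, M+s < 0, pA < pB
    have eM : Eu θA θB pA pB γ M s = θB + 2 * vcg M s * (1 - pB) + (2 * pB - 1) * γ := by
      rw [Eu, if_neg (not_le.mpr hM)]
    have em' : Eu θA θB pA pB γ m' s = θA + 2 * vcg m' s * (1 - pA) + (2 * pA - 1) * γ := by
      rw [Eu, if_pos hm']
    rcases le_or_gt 0 s with hs | hs
    · -- s ≥ 0 : vcg m' s = 0, vcg M s = -s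
      have v1 : vcg m' s = 0 := by
        rw [vcg, if_neg]; rintro (⟨_, h⟩ | ⟨h, _⟩) <;> linarith
      have v2 : vcg M s = -s := by
        rw [vcg, if_pos (Or.inr ⟨hM, hs⟩), abs_of_nonneg hs]
      rw [eM, em', v1, v2]
      -- need θA - θB + 2s(1-pB) ≤ 2γ(pB-pA)
      rcases le_or_gt θB θA with hθ | hθ
      · rw [hMdef, mstar, if_pos hθ] at hM
        have hk := key_lt (1 - pA) (θA - θB) (γ * (pA - pB)) s h1A hM
        have hss : s * (1 - pB) ≤ s * (1 - pA) :=
          mul_le_mul_of_nonneg_left (by linarith) hs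
        nlinarith
      · rw [hMdef, mstar, if_neg (not_le.mpr hθ)] at hM
        have hk := key_lt (1 - pB) (θA - θB) (γ * (pA - pB)) s h1B hM
        nlinarith
    · -- s < 0 : vcg m' s = -|s| = s, vcg M s = 0
      have v1 : vcg m' s = s := by
        rw [vcg, if_pos (Or.inl ⟨hm', hs⟩), abs_of_neg hs]; ring
      have v2 : vcg M s = 0 := by
        rw [vcg, if_neg]; rintro (⟨h, _⟩ | ⟨_, h⟩) <;> linarith
      rw [eM, em', v1, v2]
      rcases le_or_gt θB θA with hθ | hθ
      · rw [hMdef, mstar, if_pos hθ] at hM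
        have hk := key_lt (1 - pA) (θA - θB) (γ * (pA - pB)) s h1A hM
        nlinarith
      · have hγp : 0 ≤ γ * (pB - pA) := mul_nonneg hγ (by linarith)
        nlinarith
  · -- m'+s < 0, M+s ≥ 0, pB < pA
    have eM : Eu θA θB pA pB γ M s = θA + 2 * vcg M s * (1 - pA) + (2 * pA - 1) * γ := by
      rw [Eu, if_pos hM]
    have em' : Eu θA θB pA pB γ m' s = θB + 2 * vcg m' s * (1 - pB) + (2 * pB - 1) * γ := by
      rw [Eu, if_neg (not_le.mpr hm')]
    rcases le_or_gt 0 s with hs | hs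
    · -- s ≥ 0 : vcg m' s = -s, vcg M s = 0
      have v1 : vcg m' s = -s := by
        rw [vcg, if_pos (Or.inr ⟨hm', hs⟩), abs_of_nonneg hs]
      have v2 : vcg M s = 0 := by
        rw [vcg, if_neg]; rintro (⟨_, h⟩ | ⟨h, _⟩) <;> linarith
      rw [eM, em', v1, v2]
      rcases le_or_gt θB θA with hθ | hθ
      · have hγp : 0 ≤ γ * (pA - pB) := mul_nonneg hγ (by linarith)
        have hsp : 0 ≤ s * (1 - pB) := mul_nonneg hs (by linarith)
        nlinarith
      · rw [hMdef, mstar, if_neg (not_le.mpr hθ)] at hM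
        have hk := key_ge (1 - pB) (θA - θB) (γ * (pA - pB)) s h1B hM
        nlinarith
    · -- s < 0 : vcg m' s = 0, vcg M s = s
      have v1 : vcg m' s = 0 := by
        rw [vcg, if_neg]; rintro (⟨h, _⟩ | ⟨_, h⟩) <;> linarith
      have v2 : vcg M s = s := by
        rw [vcg, if_pos (Or.inl ⟨hM, hs⟩), abs_of_neg hs]; ring
      rw [eM, em', v1, v2]
      rcases le_or_gt θB θA with hθ | hθ
      · rw [hMdef, mstar, if_pos hθ] at hM
        have hk := key_ge (1 - pA) (θA - θB) (γ * (pA - pB)) s h1A hM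
        nlinarith
      · rw [hMdef, mstar, if_neg (not_le.mpr hθ)] at hM
        have hk := key_ge (1 - pB) (θA - θB) (γ * (pA - pB)) s h1B hM
        have hss : s * (1 - pB) ≤ s * (1 - pA) := by nlinarith
        nlinarith
end

section
/- Let (θA, θB, pA, pB) be any expert type with θA, θB ∈ ℝ and pA, pB ∈ (0,1), and let γ ≥ 0. Then for every opponent sum s ∈ ℝ, participating and reporting the reference report m⋆ yields at least the abstention utility: Eu(m⋆, s) ≥ (θA + (2pA−1)·γ if s ≥ 0, else θB + (2pB−1)·γ). Hence the mechanism satisfies Interim Individual Rationality. -/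
/-- Interim Individual Rationality. For every expert type and every
opponent sum `s`, reporting the reference report `m⋆` yields at least the
abstention utility (`θA + (2pA−1)γ` if `s ≥ 0`, else `θB + (2pB−1)γ`). -/
theorem interim_individual_rationality (θA θB pA pB γ : ℝ)
    (hpA : pA ∈ Set.Ioo (0 : ℝ) 1) (hpB : pB ∈ Set.Ioo (0 : ℝ) 1) (hγ : 0 ≤ γ)
    (s : ℝ) :
    (if 0 ≤ s then θA + (2 * pA - 1) * γ else θB + (2 * pB - 1) * γ) ≤
      Eu θA θB pA pB γ (mstar θA θB pA pB γ) s := by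
  obtain ⟨hA0, hA1⟩ := hpA
  obtain ⟨hB0, hB1⟩ := hpB
  have hA : (0:ℝ) < 1 - pA := by linarith
  have hB : (0:ℝ) < 1 - pB := by linarith
  set m := mstar θA θB pA pB γ with hm
  have hmval : (θB ≤ θA ∧ 2 * (1 - pA) * m = (θA - θB) + 2 * γ * (pA - pB)) ∨
      (θA < θB ∧ 2 * (1 - pB) * m = (θA - θB) + 2 * γ * (pA - pB)) := by
    rw [hm, mstar]
    by_cases h : θB ≤ θA
    · refine Or.inl ⟨h, ?_⟩
      rw [if_pos h]
      field_simp
    · refine Or.inr ⟨lt_of_not_ge h, ?_⟩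
      rw [if_neg h]
      field_simp
  rw [Eu, vcg]
  by_cases hs : 0 ≤ s
  · rw [if_pos hs]
    by_cases hms : 0 ≤ m + s
    · rw [if_pos hms, if_neg]
      · linarith
      · push_neg
        exact ⟨fun _ => hs, fun h => absurd hms (not_le.2 h)⟩
    · rw [if_neg hms, if_pos (Or.inr ⟨not_le.1 hms, hs⟩), abs_of_nonneg hs]
      have hms' : m + s < 0 := not_le.1 hms
      rcases hmval with ⟨hθ, heq⟩ | ⟨hθ, heq⟩
      · -- m < 0 here, and θA ≥ θB forces pA < pB
        have hmneg : m < 0 := by linarith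
        have hgab : γ * (pA - pB) < 0 := by nlinarith
        have hpab : pA < pB := by
          by_contra hcon
          push_neg at hcon
          nlinarith [mul_nonneg hγ (by linarith : (0:ℝ) ≤ pA - pB)]
        nlinarith [heq, mul_pos hB (by linarith : (0:ℝ) < -m - s),
          mul_pos (by linarith : (0:ℝ) < pB - pA) (by linarith : (0:ℝ) < -m)]
      · nlinarith [heq, mul_pos hB (by linarith : (0:ℝ) < -m - s)]
  · rw [if_neg hs]
    have hs' : s < 0 := not_le.1 hs
    by_cases hms : 0 ≤ m + s
    · rw [if_pos hms, if_pos (Or.inl ⟨hms, hs'⟩), abs_of_neg hs']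
      rcases hmval with ⟨hθ, heq⟩ | ⟨hθ, heq⟩
      · nlinarith [heq, mul_nonneg hA.le hms]
      · have hmpos : 0 < m := by linarith
        have hgab : 0 < γ * (pA - pB) := by nlinarith
        have hpab : pB < pA := by
          by_contra hcon
          push_neg at hcon
          nlinarith [mul_nonneg hγ (by linarith : (0:ℝ) ≤ pB - pA)]
        nlinarith [heq, mul_nonneg hA.le hms,
          mul_pos (by linarith : (0:ℝ) < pA - pB) hmpos]
    · rw [if_neg hms, if_neg]
      · linarith
      · push_neg
        exact ⟨fun h => absurd h hms, fun _ => hs'⟩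
end

section
/- Let (θA, θB, pA, pB) be an expert type with θA, θB ∈ ℝ, θA ≥ θB, pA, pB ∈ (0,1), let γ ≥ 0, and let m⋆ = (θA−θB)/(2(1−pA)) + γ·(pA−pB)/(1−pA) be the reference report. If the opponent sum s satisfies −m⋆ < s < 0 (so the expert's report pivotally changes the allocation from B to A), then participation is strictly beneficial: Eu(m⋆, s) > θB + (2pB−1)·γ, the abstention utility. Hence the mechanism satisfies strict Interim Individual Rationality (Sustainable Participation) whenever the expert is strictly pivotal toward their preferred alternative. -/
/-- Strict Interim IR (Sustainable Participation) when the expert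
is strictly pivotal toward their preferred alternative. With `θA ≥ θB` and
`−m⋆ < s < 0`, participating with the reference report strictly beats the
abstention utility `θB + (2pB−1)γ`. -/
theorem strict_interim_ir (θA θB pA pB γ : ℝ) (hθ : θB ≤ θA)
    (hpA : pA ∈ Set.Ioo (0 : ℝ) 1) (hpB : pB ∈ Set.Ioo (0 : ℝ) 1) (hγ : 0 ≤ γ)
    (s : ℝ) (hs1 : -(mstar θA θB pA pB γ) < s) (hs2 : s < 0) :
    θB + (2 * pB - 1) * γ < Eu θA θB pA pB γ (mstar θA θB pA pB γ) s := by
  set m := mstar θA θB pA pB γ with hm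
  have hpA1 : (0:ℝ) < 1 - pA := by linarith [hpA.2]
  have hms : 0 ≤ m + s := by linarith
  have hvcg : vcg m s = s := by
    rw [vcg, if_pos (Or.inl ⟨hms, hs2⟩), abs_of_neg hs2, neg_neg]
  rw [Eu, if_pos hms, hvcg]
  have hmval : m = (θA - θB) / (2 * (1 - pA)) + γ * (pA - pB) / (1 - pA) := by
    rw [hm, mstar, if_pos hθ]
  have key : 2 * (1 - pA) * m = (θA - θB) + 2 * γ * (pA - pB) := by
    rw [hmval]; field_simp
  nlinarith [mul_lt_mul_of_pos_left hs1 hpA1]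
end
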